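/- Let $f$ be convex and continuous, $X$ compact, $Z$ a linear subspace, $\rho>0$. Suppose $\omega\in Z^\perp$ is NOT optimal for $\max_{\omega\in Z^\perp}\phi^C(\omega)$, where $\phi^C(\omega)=\min_{x\in\operatorname{conv}(X)}[f(x)+\omega^\top Qx]$. Then for all $(x,z)\in\operatorname{conv}(X)\times Z$, $L_\rho(x,z,\omega)+\tfrac{\rho}{2}\|Qx-z\|_2^2-\phi^C(\omega)>0$. -/
import Mathlib

open RealInnerProductSpace

noncomputable def phiC {n q : ℕ} (f : EuclideanSpace ℝ (Fin n) → ℝ)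
    (Q : EuclideanSpace ℝ (Fin n) →ₗ[ℝ] EuclideanSpace ℝ (Fin q))
    (X : Set (EuclideanSpace ℝ (Fin n))) (ω : EuclideanSpace ℝ (Fin q)) : ℝ :=
  sInf {r : ℝ | ∃ x ∈ convexHull ℝ X, r = f x + ⟪ω, Q x⟫}

noncomputable def augL {n q : ℕ} (f : EuclideanSpace ℝ (Fin n) → ℝ)
    (Q : EuclideanSpace ℝ (Fin n) →ₗ[ℝ] EuclideanSpace ℝ (Fin q)) (ρ : ℝ)
    (x : EuclideanSpace ℝ (Fin n)) (z ω : EuclideanSpace ℝ (Fin q)) : ℝ :=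
  f x + ⟪ω, Q x⟫ + ρ / 2 * ‖Q x - z‖ ^ 2

lemma phiC_le {n q : ℕ} (f : EuclideanSpace ℝ (Fin n) → ℝ) (hfc : Continuous f)
    (Q : EuclideanSpace ℝ (Fin n) →ₗ[ℝ] EuclideanSpace ℝ (Fin q))
    (X : Set (EuclideanSpace ℝ (Fin n))) (hX : IsCompact X)
    (ω : EuclideanSpace ℝ (Fin q)) {x : EuclideanSpace ℝ (Fin n)}
    (hx : x ∈ convexHull ℝ X) : phiC f Q X ω ≤ f x + ⟪ω, Q x⟫ := by
  have hg : Continuous fun y : EuclideanSpace ℝ (Fin n) => f y + ⟪ω, Q y⟫ := by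
    exact hfc.add ((continuous_const.inner (Q.continuous_of_finiteDimensional)))
  have hcomp : IsCompact (closure (convexHull ℝ X)) :=
    Metric.isCompact_of_isClosed_isBounded isClosed_closure
      ((isBounded_convexHull.mpr hX.isBounded).closure)
  have hset : {r : ℝ | ∃ y ∈ convexHull ℝ X, r = f y + ⟪ω, Q y⟫}
      ⊆ (fun y => f y + ⟪ω, Q y⟫) '' (closure (convexHull ℝ X)) := by
    rintro r ⟨y, hy, rfl⟩; exact ⟨y, subset_closure hy, rfl⟩
  have hbdd : BddBelow {r : ℝ | ∃ y ∈ convexHull ℝ X, r = f y + ⟪ω, Q y⟫} :=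
    ((hcomp.image hg).bddBelow).mono hset
  exact csInf_le hbdd ⟨x, hx, rfl⟩

theorem stmt7 (n q : ℕ) (f : EuclideanSpace ℝ (Fin n) → ℝ)
    (hf : ConvexOn ℝ Set.univ f) (hfc : Continuous f)
    (Q : EuclideanSpace ℝ (Fin n) →ₗ[ℝ] EuclideanSpace ℝ (Fin q))
    (X : Set (EuclideanSpace ℝ (Fin n))) (hX : IsCompact X) (hXne : X.Nonempty)
    (Z : Submodule ℝ (EuclideanSpace ℝ (Fin q))) (ρ : ℝ) (hρ : 0 < ρ)
    (ω : EuclideanSpace ℝ (Fin q)) (hω : ω ∈ Zᗮ)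
    (hnotopt : ∃ ω' ∈ Zᗮ, phiC f Q X ω < phiC f Q X ω') :
    ∀ x ∈ convexHull ℝ X, ∀ z ∈ Z,
      augL f Q ρ x z ω + ρ / 2 * ‖Q x - z‖ ^ 2 - phiC f Q X ω > 0 := by
  intro x hx z hz
  unfold augL
  by_cases hqz : Q x = z
  · obtain ⟨ω', hω', hlt⟩ := hnotopt
    have hi : ⟪ω, Q x⟫ = 0 := by
      rw [hqz, real_inner_comm]; exact hω z hz
    have hi' : ⟪ω', Q x⟫ = 0 := by
      rw [hqz, real_inner_comm]; exact hω' z hz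
    have h2 : phiC f Q X ω' ≤ f x := by
      have := phiC_le f hfc Q X hX ω' hx
      rwa [hi', add_zero] at this
    have hn : ‖Q x - z‖ = 0 := by rw [hqz, sub_self, norm_zero]
    rw [hi, hn]
    ring_nf
    linarith
  · have h1 := phiC_le f hfc Q X hX ω hx
    have hpos : 0 < ‖Q x - z‖ ^ 2 := by
      have h0 : Q x - z ≠ 0 := sub_ne_zero.mpr hqz
      have := norm_pos_iff.mpr h0
      positivity
    nlinarith [mul_pos hρ hpos]
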